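/- If a Hamiltonian cycle Boolean network f: {0,1}^n → {0,1}^n (n ≠ 2) is self-dual in [n] (f(¬x) = ¬f(x)), then its interaction graph is the complete digraph with loops K_n: for every pair (i,j) ∈ [n] × [n], f_j depends on x_i. -/

import Mathlib

def flipBit {n : ℕ} (x : Fin n → Bool) (i : Fin n) : Fin n → Bool :=
  Function.update x i (!(x i))

def negAll {n : ℕ} (x : Fin n → Bool) : Fin n → Bool := fun k => !(x k)

/-! Since `f` commutes with `negAll` and runs through the whole cube in a single cycle,
`f^[2^(n-1)] = negAll`. Hence along the cycle coordinate `j` changes an odd number of times in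
each half-turn, so the number of `x` with `f x j ≠ x j` is `2 mod 4`. If `f_j` did not depend on
`x_i`, this set would be invariant under flipping bit `i`. For `i ≠ j`, flipping bit `i` and
`negAll` generate a free action of the Klein four-group on it, so its size is divisible by 4; for
`i = j`, flipping bit `i` swaps it with its complement, so its size is `2^(n-1)`, which is
`2 mod 4` only when `n = 2`. -/

open Finset Function

namespace Function

variable {α : Type*} {f : α → α} {x : α}

theorem minimalPeriod_eq_of_isLeast {N : ℕ} (h : IsLeast {k : ℕ | 0 < k ∧ f^[k] x = x} N) :
    minimalPeriod f x = N :=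
  le_antisymm (IsPeriodicPt.minimalPeriod_le h.1.1 h.1.2)
    (h.2 ⟨IsPeriodicPt.minimalPeriod_pos h.1.1 h.1.2, isPeriodicPt_minimalPeriod f x⟩)

variable [Fintype α]

theorem image_range_iterate_eq_univ [DecidableEq α] (h : minimalPeriod f x = Fintype.card α) :
    (range (Fintype.card α)).image (f^[·] x) = univ := by
  refine eq_univ_of_card _ ?_
  rw [card_image_of_injOn (by rw [coe_range, ← h]; exact iterate_injOn_Iio_minimalPeriod),
    card_range]

theorem exists_iterate_eq_of_minimalPeriod_eq_card (h : minimalPeriod f x = Fintype.card α)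
    (y : α) : ∃ t < Fintype.card α, f^[t] x = y := by
  classical
  have hy := mem_univ y
  rw [← image_range_iterate_eq_univ h, mem_image] at hy
  simpa using hy

theorem card_filter_eq_card_filter_range_iterate (h : minimalPeriod f x = Fintype.card α)
    (P : α → Prop) [DecidablePred P] :
    #{y | P y} = #{t ∈ range (Fintype.card α) | P (f^[t] x)} := by
  classical
  rw [← image_range_iterate_eq_univ h, filter_image, card_image_of_injOn]
  refine Set.InjOn.mono (fun t ht => ?_) (h ▸ iterate_injOn_Iio_minimalPeriod)
  simpa using (mem_filter.1 ht).1

theorem exists_two_mul_eq_card_iterate_eq {σ : α → α} (hc : Function.Commute f σ)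
    (hσ : Involutive σ) (hx : σ x ≠ x) (h : minimalPeriod f x = Fintype.card α) :
    ∃ s, 2 * s = Fintype.card α ∧ f^[s] = σ := by
  obtain ⟨s, hs, hsx⟩ := exists_iterate_eq_of_minimalPeriod_eq_card h (σ x)
  have hs0 : s ≠ 0 := by
    rintro rfl
    exact hx hsx.symm
  have h2s : IsPeriodicPt f (2 * s) x := by
    rw [IsPeriodicPt, IsFixedPt, two_mul, iterate_add_apply, hsx, (hc.iterate_left s).eq, hsx,
      hσ x]
  refine ⟨s, Nat.eq_of_dvd_of_lt_two_mul (by omega) (h ▸ h2s.minimalPeriod_dvd) (by omega), ?_⟩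
  funext y
  obtain ⟨t, -, rfl⟩ := exists_iterate_eq_of_minimalPeriod_eq_card h y
  rw [← iterate_add_apply, add_comm, iterate_add_apply, hsx, (hc.iterate_left t).eq]

end Function

section Flips

variable (c : ℕ → Bool)

theorem even_card_filter_ne_succ_iff (k : ℕ) :
    Even #{t ∈ range k | c t ≠ c (t + 1)} ↔ c k = c 0 := by
  induction k with
  | zero => simp
  | succ k ih =>
    rw [range_add_one, filter_insert]
    split_ifs with hk
    · rw [card_insert_of_notMem (by simp), Nat.even_add_one, ih]
      revert hk
      cases c k <;> cases c (k + 1) <;> cases c 0 <;> simp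
    · rw [ih, not_not.1 hk]

theorem card_filter_ne_succ_range_two_mul_mod_four {s : ℕ} (hc : ∀ t, c (t + s) = !c t) :
    #{t ∈ range (2 * s) | c t ≠ c (t + 1)} % 4 = 2 := by
  have hshift : ∀ t, (c (s + t) ≠ c (s + t + 1)) ↔ (c t ≠ c (t + 1)) := fun t => by
    rw [add_comm s, hc, add_right_comm, hc]
    cases c t <;> cases c (t + 1) <;> simp
  have hsplit :
      #{t ∈ range (2 * s) | c t ≠ c (t + 1)} = 2 * #{t ∈ range s | c t ≠ c (t + 1)} := by
    simp only [card_filter, two_mul, sum_range_add, hshift]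
  have hodd : ¬Even #{t ∈ range s | c t ≠ c (t + 1)} := by
    rw [even_card_filter_ne_succ_iff, ← zero_add s, hc]
    exact Bool.not_ne_self _
  obtain ⟨m, hm⟩ := Nat.not_even_iff_odd.1 hodd
  omega

end Flips

theorem card_eq_two_mul_card_filter_of_involutive {α : Type*} {g : α → α} (hg : Involutive g)
    {s : Finset α} (hs : ∀ x, g x ∈ s ↔ x ∈ s) (P : α → Prop) [DecidablePred P]
    (hP : ∀ x, P (g x) ↔ ¬P x) : #s = 2 * #{x ∈ s | P x} := by
  rw [← card_filter_add_card_filter_not P, two_mul, add_right_inj]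
  refine (card_nbij' g g ?_ ?_ (fun x _ => hg x) (fun x _ => hg x))
  all_goals
    intro x hx
    simp_all

section BooleanCube

variable {n : ℕ}

@[simp]
theorem flipBit_apply_self (x : Fin n → Bool) (i : Fin n) : flipBit x i i = !x i :=
  update_self i _ x

@[simp]
theorem flipBit_apply_of_ne (x : Fin n → Bool) {i k : Fin n} (h : k ≠ i) : flipBit x i k = x k :=
  update_of_ne h _ x

theorem flipBit_involutive (i : Fin n) : Involutive (flipBit · i) := fun x => by
  funext k
  rcases eq_or_ne k i with rfl | hk <;> simp [*]

@[simp]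
theorem negAll_apply (x : Fin n → Bool) (k : Fin n) : negAll x k = !x k := rfl

theorem negAll_involutive : Involutive (negAll (n := n)) := fun x => by
  funext k
  simp

theorem negAll_ne (x : Fin n → Bool) (j : Fin n) : negAll x ≠ x := fun h => by
  simpa using congrFun h j

theorem card_filter_apply_ne_mod_four {f : (Fin n → Bool) → (Fin n → Bool)} {x : Fin n → Bool}
    (hx : minimalPeriod f x = 2 ^ n) (hsd : Function.Commute f negAll) (j : Fin n) :
    #{y | f y j ≠ y j} % 4 = 2 := by
  have hcard : Fintype.card (Fin n → Bool) = 2 ^ n := by simp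
  rw [← hcard] at hx
  obtain ⟨s, hs, hfs⟩ :=
    exists_two_mul_eq_card_iterate_eq hsd negAll_involutive (negAll_ne x j) hx
  rw [card_filter_eq_card_filter_range_iterate hx, ← hs]
  have hc : ∀ t, f^[t + s] x j = !f^[t] x j := fun t => by
    rw [iterate_add_apply, hfs, ← negAll_apply, (hsd.iterate_left t).eq]
  simpa only [← iterate_succ_apply' f, ne_comm] using
    card_filter_ne_succ_range_two_mul_mod_four (fun t => f^[t] x j) hc

theorem two_pow_eq_two_mul_card_filter_apply_ne {f : (Fin n → Bool) → (Fin n → Bool)} {i : Fin n}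
    (hind : ∀ x, f (flipBit x i) i = f x i) : 2 ^ n = 2 * #{x | f x i ≠ x i} := by
  have := card_eq_two_mul_card_filter_of_involutive (flipBit_involutive i) (s := univ)
    (by simp) (fun x => f x i ≠ x i) (fun x => by
      simp only [hind, flipBit_apply_self]
      cases f x i <;> cases x i <;> simp)
  simpa using this

theorem four_dvd_card_filter_apply_ne {f : (Fin n → Bool) → (Fin n → Bool)} {i j : Fin n}
    (hij : j ≠ i) (hind : ∀ x, f (flipBit x i) j = f x j)
    (hsd : Function.Commute f negAll) : 4 ∣ #{x | f x j ≠ x j} := by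
  set D : Finset (Fin n → Bool) := {x | f x j ≠ x j}
  have hD := card_eq_two_mul_card_filter_of_involutive (flipBit_involutive i) (s := D)
    (by simp [D, hind, hij]) (fun x => x i = x j) (fun x => by
      simp only [flipBit_apply_self, flipBit_apply_of_ne _ hij]
      cases x i <;> cases x j <;> simp)
  have hD' := card_eq_two_mul_card_filter_of_involutive negAll_involutive
    (s := {x ∈ D | x i = x j}) (by simp [D, hsd.eq]) (fun x => x j = true) (fun x => by simp)
  omega

end BooleanCube

/-- A Hamiltonian cycle Boolean network self-dual in `[n]` (n ≠ 2) has
interaction graph `K_n` (all arcs, including loops). -/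
theorem stmt10 {n : ℕ} (hn : n ≠ 2) (f : (Fin n → Bool) → (Fin n → Bool))
    (hham : ∀ x : Fin n → Bool, IsLeast {k : ℕ | 0 < k ∧ f^[k] x = x} (2 ^ n))
    (hsd : ∀ x : Fin n → Bool, f (negAll x) = negAll (f x)) :
    ∀ i j : Fin n, ∃ x : Fin n → Bool, f x j ≠ f (flipBit x i) j := by
  intro i j
  by_contra! hind
  have hmod :=
    card_filter_apply_ne_mod_four (minimalPeriod_eq_of_isLeast (hham fun _ => false)) hsd j
  rcases eq_or_ne j i with rfl | hij
  · have hcard := two_pow_eq_two_mul_card_filter_apply_ne fun x => (hind x).symm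
    rcases n with _ | _ | _ | n
    · exact j.elim0
    · omega
    · exact hn rfl
    · rw [pow_add] at hcard
      omega
  · have hdvd := four_dvd_card_filter_apply_ne hij (fun x => (hind x).symm) hsd
    omega
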